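/- Suppose R contains ℚ (R is a ℚ-algebra), let c ∈ R be an element that is not a zero divisor, and let p ∈ R[X_1,…,X_N] be a nonzero homogeneous polynomial of degree d. If M_{jk}(p) lies in the ideal generated by X·X − c for all pairs of distinct indices j, k ∈ {1,…,N}, then d is even and p = a·(X·X)^{d/2} for some a ∈ R. -/

import Mathlib

open MvPolynomial

/-- The rotation generator `M_{jk} p = X_j ∂_k p − X_k ∂_j p`. -/
noncomputable def rot {R : Type*} [CommRing R] {N : ℕ} (j k : Fin N)
    (p : MvPolynomial (Fin N) R) : MvPolynomial (Fin N) R :=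
  X j * pderiv k p - X k * pderiv j p

/-- The Laplacian `Δ p = Σ_j ∂_j² p`. -/
noncomputable def lap {R : Type*} [CommRing R] {N : ℕ}
    (p : MvPolynomial (Fin N) R) : MvPolynomial (Fin N) R :=
  ∑ j, pderiv j (pderiv j p)

/-- The polynomial `X·X = X_1² + ⋯ + X_N²`. -/
noncomputable def XX (R : Type*) [CommRing R] (N : ℕ) : MvPolynomial (Fin N) R :=
  ∑ j, X j ^ 2

/-!
A homogeneous multiple `q (X·X − c)` vanishes: in the lowest degree of `q` only `−c q_s` survives
and in the highest only `q_t X·X`, which would force `s = t + 2`. Hence every `M_{jk}` kills `p`.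
Summing `X_j M_{jk} p = 0` over `j` and using Euler's identity gives `(X·X) ∂_k p = d X_k p`;
applying `∂_k` and summing once more gives `(X·X) Δp = d (N + d − 2) p`. For `N ≥ 2` and `d ≠ 0`
the factor is invertible in a ℚ-algebra, so `X·X` divides `p`, and the quotient is again killed by
every `M_{jk}`, since `M_{jk}` is a derivation with `M_{jk}(X·X) = 0`. Induct on `d`.
-/

open nonZeroDivisors

namespace MvPolynomial

variable {R σ : Type*} [CommRing R]

lemma C_mem_nonZeroDivisors {c : R} (hc : c ∈ R⁰) :
    (C c : MvPolynomial σ R) ∈ (MvPolynomial σ R)⁰ := by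
  refine mem_nonZeroDivisors_iff_left.mpr fun f hf => ?_
  ext m
  simpa [coeff_C_mul, mul_left_mem_nonZeroDivisors_eq_zero_iff hc] using congrArg (coeff m) hf

attribute [local instance] gradedAlgebra in
lemma homogeneousComponent_mul_of_isHomogeneous_right {g : MvPolynomial σ R} {k : ℕ}
    (hg : g.IsHomogeneous k) (f : MvPolynomial σ R) (n : ℕ) :
    homogeneousComponent n (f * g) = if k ≤ n then homogeneousComponent (n - k) f * g else 0 := by
  simpa [← decomposition.decompose'_apply] using
    DirectSum.coe_decompose_mul_of_right_mem (homogeneousSubmodule σ R) n (a := f) hg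

lemma exists_homogeneousComponent_ne_zero_between {q : MvPolynomial σ R} (hq : q ≠ 0) :
    ∃ s t, s ≤ t ∧ homogeneousComponent s q ≠ 0 ∧ homogeneousComponent t q ≠ 0 ∧
      ∀ n, homogeneousComponent n q ≠ 0 → s ≤ n ∧ n ≤ t := by
  classical
  set S := (Finset.range (q.totalDegree + 1)).filter (homogeneousComponent · q ≠ 0)
  have hS (n : ℕ) : n ∈ S ↔ homogeneousComponent n q ≠ 0 := by
    simp only [S, Finset.mem_filter, Finset.mem_range, and_iff_right_iff_imp]
    intro hn
    by_contra h
    exact hn (homogeneousComponent_eq_zero _ _ (by omega))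
  have hSne : S.Nonempty := by
    by_contra h
    refine hq ?_
    rw [← sum_homogeneousComponent q]
    exact Finset.sum_eq_zero fun n _ => not_not.mp fun h' => h ⟨n, (hS n).mpr h'⟩
  refine ⟨S.min' hSne, S.max' hSne, S.min'_le _ (S.max'_mem hSne), (hS _).mp (S.min'_mem hSne),
    (hS _).mp (S.max'_mem hSne), fun n hn => ⟨S.min'_le _ ((hS n).mpr hn), S.le_max' _ ((hS n).mpr hn)⟩⟩

lemma IsHomogeneous.eq_zero_of_mem_span_sub_C {g f : MvPolynomial σ R} {k d : ℕ} {c : R}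
    (hg : g.IsHomogeneous k) (hk : 0 < k) (hg₀ : g ∈ (MvPolynomial σ R)⁰) (hc : c ∈ R⁰)
    (hf : f.IsHomogeneous d) (hmem : f ∈ Ideal.span {g - C c}) : f = 0 := by
  obtain ⟨q, rfl⟩ := Ideal.mem_span_singleton'.mp hmem
  by_contra hf₀
  have hq : q ≠ 0 := by rintro rfl; exact hf₀ (zero_mul _)
  have hcomp (n : ℕ) : homogeneousComponent n (q * (g - C c)) =
      (if k ≤ n then homogeneousComponent (n - k) q * g else 0) - C c * homogeneousComponent n q := by
    rw [mul_sub, map_sub, homogeneousComponent_mul_of_isHomogeneous_right hg, mul_comm q,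
      homogeneousComponent_C_mul]
  have hdeg (n : ℕ) (hn : homogeneousComponent n (q * (g - C c)) ≠ 0) : n = d := by
    by_contra hne
    exact hn (by rw [homogeneousComponent_of_mem hf, if_neg hne])
  obtain ⟨s, t, hst, hs, ht, hbetween⟩ := exists_homogeneousComponent_ne_zero_between hq
  have hlow : s = d := by
    apply hdeg
    have hbelow : (if k ≤ s then homogeneousComponent (s - k) q * g else 0) = 0 := by
      split_ifs with hks
      · by_contra h
        have := (hbetween _ (left_ne_zero_of_mul h)).1
        omega
      · rfl
    rwa [hcomp, hbelow, zero_sub, neg_ne_zero, Ne,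
      mul_left_mem_nonZeroDivisors_eq_zero_iff (C_mem_nonZeroDivisors hc)]
  have hhigh : t + k = d := by
    apply hdeg
    have habove : homogeneousComponent (t + k) q = 0 := by
      by_contra h
      have := (hbetween _ h).2
      omega
    rwa [hcomp, if_pos (by omega), Nat.add_sub_cancel, habove, mul_zero, sub_zero, Ne,
      mul_right_mem_nonZeroDivisors_eq_zero_iff hg₀]
  omega

end MvPolynomial

section Rotations

variable {R : Type*} [CommRing R] {N : ℕ}

def IsRotationInvariant (p : MvPolynomial (Fin N) R) : Prop :=
  ∀ j k : Fin N, j ≠ k → rot j k p = 0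

lemma rot_mul (j k : Fin N) (f g : MvPolynomial (Fin N) R) :
    rot j k (f * g) = f * rot j k g + g * rot j k f := by
  simp only [rot, Derivation.leibniz, smul_eq_mul]
  ring

lemma pderiv_XX (k : Fin N) : pderiv k (XX R N) = 2 * X k := by
  simp [XX, map_sum, pderiv_X, Pi.single_apply]

lemma rot_XX (j k : Fin N) : rot j k (XX R N) = 0 := by
  rw [rot, pderiv_XX, pderiv_XX]
  ring

lemma isHomogeneous_XX : (XX R N).IsHomogeneous 2 :=
  IsHomogeneous.sum _ _ _ fun i _ => isHomogeneous_X_pow i 2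

lemma XX_mem_nonZeroDivisors (hN : N ≠ 0) : XX R N ∈ (MvPolynomial (Fin N) R)⁰ := by
  obtain ⟨M, rfl⟩ := Nat.exists_eq_succ_of_ne_zero hN
  have hXX : finSuccEquiv R M (XX R (M + 1)) = Polynomial.X ^ 2 + Polynomial.C (XX R M) := by
    simp [XX, Fin.sum_univ_succ, map_sum, finSuccEquiv_X_zero, finSuccEquiv_X_succ]
  have hmonic : (Polynomial.X ^ 2 + Polynomial.C (XX R M)).Monic :=
    Polynomial.monic_X_pow_add (Polynomial.degree_C_le.trans_lt (by norm_num))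
  refine mem_nonZeroDivisors_of_injective (finSuccEquiv R M).injective ?_
  rw [hXX]
  exact hmonic.mem_nonZeroDivisors

lemma IsRotationInvariant.of_XX_mul (hN : N ≠ 0) {G : MvPolynomial (Fin N) R}
    (h : IsRotationInvariant (XX R N * G)) : IsRotationInvariant G := by
  intro j k hjk
  have := h j k hjk
  rwa [rot_mul, rot_XX, mul_zero, add_zero,
    mul_left_mem_nonZeroDivisors_eq_zero_iff (XX_mem_nonZeroDivisors hN)] at this

variable {p : MvPolynomial (Fin N) R} {d : ℕ}

lemma MvPolynomial.IsHomogeneous.rot (hp : p.IsHomogeneous d) (j k : Fin N) :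
    (rot j k p).IsHomogeneous (1 + (d - 1)) :=
  ((isHomogeneous_X R j).mul hp.pderiv).sub ((isHomogeneous_X R k).mul hp.pderiv)

lemma MvPolynomial.IsHomogeneous.lap (hp : p.IsHomogeneous d) : (lap p).IsHomogeneous (d - 2) :=
  IsHomogeneous.sum _ _ _ fun _ _ => hp.pderiv.pderiv

lemma IsRotationInvariant.XX_mul_pderiv (hrot : IsRotationInvariant p) (hp : p.IsHomogeneous d)
    (k : Fin N) : XX R N * pderiv k p = d • (X k * p) := by
  calc XX R N * pderiv k p = ∑ j, X j * (X j * pderiv k p) := by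
        simp only [XX, Finset.sum_mul, ← mul_assoc, sq]
    _ = ∑ j, X j * (X k * pderiv j p) := by
        refine Finset.sum_congr rfl fun j _ => ?_
        rcases eq_or_ne j k with rfl | hjk
        · rfl
        · rw [sub_eq_zero.mp (hrot j k hjk)]
    _ = X k * ∑ j, X j * pderiv j p := by
        simp only [Finset.mul_sum, mul_left_comm]
    _ = d • (X k * p) := by rw [hp.sum_X_mul_pderiv, mul_smul_comm]

lemma IsRotationInvariant.XX_mul_lap (hrot : IsRotationInvariant p) (hp : p.IsHomogeneous d) :
    XX R N * lap p = ((d * (N + d - 2) : ℤ) : MvPolynomial (Fin N) R) * p := by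
  have hsum := congrArg (fun f : Fin N → MvPolynomial (Fin N) R => ∑ k, pderiv k (f k))
    (funext (hrot.XX_mul_pderiv hp))
  have hEuler := hp.sum_X_mul_pderiv
  have htwice : ∑ k, pderiv k p * (2 * X k) = 2 * ∑ k, X k * pderiv k p := by
    rw [Finset.mul_sum]
    exact Finset.sum_congr rfl fun k _ => by ring
  simp only [Derivation.leibniz, pderiv_XX, pderiv_X_self, Derivation.map_natCast, smul_eq_mul,
    nsmul_eq_mul, Finset.sum_add_distrib, ← Finset.mul_sum, mul_zero, Finset.sum_const_zero,
    Finset.sum_const, Finset.card_univ, Fintype.card_fin, htwice] at hsum hEuler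
  rw [lap]
  push_cast
  linear_combination hsum - (2 - (d : MvPolynomial (Fin N) R)) * hEuler

lemma IsRotationInvariant.exists_eq_XX_mul [Algebra ℚ R] (hN : 2 ≤ N)
    (hrot : IsRotationInvariant p) (hp : p.IsHomogeneous d) (hd : d ≠ 0) :
    ∃ G : MvPolynomial (Fin N) R, G.IsHomogeneous (d - 2) ∧ p = XX R N * G := by
  set m : ℤ := d * (N + d - 2)
  have hm : (m : ℚ) ≠ 0 := by
    have : 0 < m := mul_pos (by omega) (by omega)
    exact_mod_cast this.ne'
  refine ⟨C (algebraMap ℚ R (m : ℚ)⁻¹) * lap p, hp.lap.C_mul _, ?_⟩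
  have hinv : C (algebraMap ℚ R (m : ℚ)⁻¹) * (m : MvPolynomial (Fin N) R) = 1 := by
    rw [← map_intCast (C : R →+* MvPolynomial (Fin N) R), ← C_mul, ← map_intCast (algebraMap ℚ R),
      ← map_mul, inv_mul_cancel₀ hm, map_one, C_1]
  rw [mul_left_comm, hrot.XX_mul_lap hp, ← mul_assoc, hinv, one_mul]

theorem IsRotationInvariant.eq_C_mul_XX_pow [Algebra ℚ R] (hN : 2 ≤ N) (hp₀ : p ≠ 0)
    (hp : p.IsHomogeneous d) (hrot : IsRotationInvariant p) :
    Even d ∧ ∃ a : R, p = C a * XX R N ^ (d / 2) := by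
  induction d using Nat.strong_induction_on generalizing p with
  | _ d ih =>
  rcases eq_or_ne d 0 with rfl | hd
  · refine ⟨Even.zero, coeff 0 p, ?_⟩
    rw [pow_zero, mul_one, ← totalDegree_eq_zero_iff_eq_C, totalDegree_zero_iff_isHomogeneous]
    exact hp
  obtain ⟨G, hG, rfl⟩ := hrot.exists_eq_XX_mul hN hp hd
  have hG₀ : G ≠ 0 := by rintro rfl; exact hp₀ (mul_zero _)
  obtain ⟨e, rfl⟩ : ∃ e, d = e + 2 := by
    have := (isHomogeneous_XX.mul hG).inj_right hp hp₀
    exact ⟨d - 2, by omega⟩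
  obtain ⟨heven, a, rfl⟩ := ih e (by omega) hG₀ (by simpa using hG) (hrot.of_XX_mul (by omega))
  refine ⟨heven.add even_two, a, ?_⟩
  rw [Nat.add_div_right _ two_pos, pow_succ]
  ring

end Rotations

/-- over a ℚ-algebra, if `c` is not a zero divisor, `p` is nonzero
homogeneous of degree `d`, and all `M_{jk} p` lie in the ideal generated by `X·X − c`,
then `d` is even and `p = a·(X·X)^{d/2}`. -/
theorem stmt11 {R : Type*} [CommRing R] [Algebra ℚ R] {N : ℕ} (hN : 2 ≤ N)
    (c : R) (hc : c ∈ nonZeroDivisors R)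
    (d : ℕ) (p : MvPolynomial (Fin N) R) (hp : p ≠ 0) (hhom : p.IsHomogeneous d)
    (h : ∀ j k : Fin N, j ≠ k → rot j k p ∈ Ideal.span {XX R N - C c}) :
    Even d ∧ ∃ a : R, p = C a * XX R N ^ (d / 2) := by
  have hrot : IsRotationInvariant p := fun j k hjk =>
    isHomogeneous_XX.eq_zero_of_mem_span_sub_C two_pos (XX_mem_nonZeroDivisors (by omega)) hc
      (hhom.rot j k) (h j k hjk)
  exact hrot.eq_C_mul_XX_pow hN hp hhom
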